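/- Let ω be an infinite reduced word on S with inversion set N(ω) = ⋃_i N(w_i), and let w ∈ W. Then w is a prefix of ω (i.e., w ≤ w_j in the weak order for some prefix w_j of ω) if and only if N(w) ⊆ N(ω). -/

import Mathlib

open Pointwise

noncomputable section

/-- The set of nonnegative linear combinations of elements of `X`. -/
def coneOf {V : Type*} [AddCommGroup V] [Module ℝ V] (X : Set V) : Set V :=
  {v | ∃ (n : ℕ) (c : Fin n → ℝ) (f : Fin n → V),
    (∀ i, 0 ≤ c i) ∧ (∀ i, f i ∈ X) ∧ ∑ i, c i • f i = v}

/-- A geometric representation of the Coxeter system `cs` on the real quadratic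
space `(V, bil)`: each simple generator acts as the `bil`-reflection in its simple
root, and the simple roots form a simple system. -/
structure GeomRep {B : Type*} [Fintype B] {W : Type*} [Group W]
    (M : CoxeterMatrix B) (cs : CoxeterSystem M W)
    (V : Type*) [AddCommGroup V] [Module ℝ V] where
  /-- the symmetric bilinear form -/
  bil : LinearMap.BilinForm ℝ V
  bil_symm : ∀ u v : V, bil u v = bil v u
  /-- the representation of `W` by linear automorphisms of `V` -/
  π : W →* (V ≃ₗ[ℝ] V)
  /-- the simple roots -/
  α : B → V
  norm_one : ∀ i, bil (α i) (α i) = 1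
  simple_refl : ∀ i v, π (cs.simple i) v = v - (2 * bil (α i) v) • α i
  pos_indep : ∀ c : B → ℝ, (∀ i, 0 ≤ c i) → ∑ i, c i • α i = 0 → ∀ i, c i = 0
  angle_finite : ∀ i j, i ≠ j → M.M i j ≠ 0 →
    bil (α i) (α j) = - Real.cos (Real.pi / (M.M i j : ℝ))
  angle_infinite : ∀ i j, i ≠ j → M.M i j = 0 → bil (α i) (α j) ≤ -1

namespace GeomRep

variable {B : Type*} [Fintype B] {W : Type*} [Group W]
  {M : CoxeterMatrix B} {cs : CoxeterSystem M W}
  {V : Type*} [AddCommGroup V] [Module ℝ V]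

/-- The root system `Φ = W(Δ)`. -/
def Phi (G : GeomRep M cs V) : Set V := {v | ∃ (w : W) (i : B), G.π w (G.α i) = v}

/-- The positive roots `Φ⁺ = cone(Δ) ∩ Φ`. -/
def PhiPos (G : GeomRep M cs V) : Set V := G.Phi ∩ coneOf (Set.range G.α)

/-- The (left) inversion set `N(w) = Φ⁺ ∩ w(Φ⁻)`. -/
def N (G : GeomRep M cs V) (w : W) : Set V := G.PhiPos ∩ (G.π w '' (-G.PhiPos))

/-- `A ⊆ Φ⁺` is closed if for all `α, β ∈ A`, every root in `cone(α,β)` lies in `A`. -/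
def IsClosedSet (G : GeomRep M cs V) (A : Set V) : Prop :=
  ∀ a ∈ A, ∀ b ∈ A, coneOf {a, b} ∩ G.Phi ⊆ A

/-- `A` is biclosed if `A` and `Φ⁺ \ A` are both closed. -/
def IsBiclosed (G : GeomRep M cs V) (A : Set V) : Prop :=
  G.IsClosedSet A ∧ G.IsClosedSet (G.PhiPos \ A)

/-- `A` is convex if `A = cone(A) ∩ Φ`. -/
def IsConvexSet (G : GeomRep M cs V) (A : Set V) : Prop :=
  A = coneOf A ∩ G.Phi

/-- `A` is biconvex if `A` and `Φ⁺ \ A` are both convex. -/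
def IsBiconvex (G : GeomRep M cs V) (A : Set V) : Prop :=
  G.IsConvexSet A ∧ G.IsConvexSet (G.PhiPos \ A)

/-- `A ⊆ Φ⁺` is separable if `cone(A) ∩ cone(Φ⁺ \ A) = {0}`. -/
def IsSeparable (G : GeomRep M cs V) (A : Set V) : Prop :=
  coneOf A ∩ coneOf (G.PhiPos \ A) = {0}

end GeomRep

/-- The right weak order on a Coxeter group. -/
def WeakLE {B : Type*} {W : Type*} [Group W] {M : CoxeterMatrix B}
    (cs : CoxeterSystem M W) (u w : W) : Prop :=
  cs.length u + cs.length (u⁻¹ * w) = cs.length w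

/-!
Every root is positive or negative, and `w α_i > 0` exactly when `s_i` is not a right descent of
`w`: peel off from `w` its longest alternating suffix `⋯ s_i s_j`, which has fewer than `m_ij`
letters, and note that in rank two the coefficients of `(⋯ s_i s_j) α_i` are the Chebyshev values
`sin(kπ/m_ij) / sin(π/m_ij) ≥ 0` (or are increasing when `m_ij = ∞`). Hence
`N(s_i u) = {α_i} ∪ s_i N(u)` whenever `s_i u > u`, and induction on length gives that `N(w)` is
finite and that `u ≤ v ↔ N(u) ⊆ N(v)`. The prefixes `w_n` of `ω` form a chain, so the finite set
`N(w)` lies in `⋃ N(w_n)` iff it lies in one `N(w_j)`, that is, iff `w ≤ w_j`.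
-/

theorem Set.Finite.exists_subset_of_subset_iUnion_of_monotone {α ι : Type*} [Preorder ι]
    [IsDirectedOrder ι] [Nonempty ι] {s : Set α} (hs : s.Finite) {t : ι → Set α}
    (ht : Monotone t) (h : s ⊆ ⋃ i, t i) : ∃ i, s ⊆ t i := by
  obtain ⟨I, hI, hsI⟩ := Set.finite_subset_iUnion hs h
  obtain ⟨j, hj⟩ := hI.exists_le
  exact ⟨j, hsI.trans (Set.iUnion₂_subset fun i hi => ht (hj i hi))⟩

open CoxeterSystem

namespace CoxeterSystem

variable {B : Type*} {W : Type*} [Group W] {M : CoxeterMatrix B} (cs : CoxeterSystem M W)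

local prefix:100 "ℓ" => cs.length
local prefix:100 "σ" => cs.simple

theorem length_mul_wordProd_le (u : W) (l : List B) : ℓ (u * cs.wordProd l) ≤ ℓ u + l.length :=
  (cs.length_mul_le _ _).trans (Nat.add_le_add_left (cs.length_wordProd_le l) _)

theorem induction_on_reduced_left {p : W → Prop} (one : p 1)
    (mul : ∀ w i, ¬cs.IsLeftDescent w i → p w → p (σ i * w)) (w : W) : p w := by
  induction hn : ℓ w using Nat.strong_induction_on generalizing w with
  | _ n ih =>
    rcases eq_or_ne w 1 with rfl | hw
    · exact one
    obtain ⟨i, hi⟩ := cs.exists_leftDescent_of_ne_one hw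
    have hlen := cs.isLeftDescent_iff.mp hi
    rw [← cs.simple_mul_simple_cancel_left i (w := w)]
    exact mul _ i (cs.isLeftDescent_iff_not_isLeftDescent_mul.mp hi) (ih _ (by omega) _ rfl)

theorem wordProd_braidWord_mul_simple {i j : B} (hM : M i j ≠ 0) :
    cs.wordProd (alternatingWord i j (M i j)) * σ i =
      cs.wordProd (alternatingWord i j (M i j - 1)) := by
  obtain ⟨m, hm⟩ := Nat.exists_eq_add_one_of_ne_zero hM
  have braid := cs.wordProd_braidWord_eq i j
  rw [braidWord, braidWord, M.symmetric j i, hm, alternatingWord_succ j i] at braid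
  rw [hm, braid, wordProd_concat, mul_assoc, simple_mul_simple_self, mul_one, Nat.add_sub_cancel]

variable {cs} in
/-- The longest alternating suffix `⋯ s_i s_j` of `w` has fewer than `m_ij` letters: otherwise
the braid relation would make `s_i` a right descent of `w`. -/
theorem exists_eq_mul_alternatingWord {w : W} {i j : B} (hij : i ≠ j)
    (hi : ¬cs.IsRightDescent w i) (hj : cs.IsRightDescent w j) :
    ∃ (u : W) (k : ℕ), w = u * cs.wordProd (alternatingWord i j k) ∧ ℓ w = ℓ u + k ∧ 0 < k ∧
      ¬cs.IsRightDescent u i ∧ ¬cs.IsRightDescent u j ∧ (M i j = 0 ∨ k < M i j) := by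
  induction hn : ℓ w using Nat.strong_induction_on generalizing w i j with
  | _ n ih =>
    have hlen := cs.isRightDescent_iff.mp hj
    have hw' : ¬cs.IsRightDescent (w * σ j) j := cs.isRightDescent_iff_not_isRightDescent_mul.mp hj
    by_cases hw'i : cs.IsRightDescent (w * σ j) i
    swap
    · refine ⟨w * σ j, 1, by simp [alternatingWord], by omega, one_pos, hw'i, hw', ?_⟩
      have := M.off_diagonal i j hij
      omega
    obtain ⟨u, k, hdec, hlen', hk, hui, huj, hbound⟩ :=
      ih _ (by omega) hij.symm hw' hw'i rfl
    have hw : w = u * cs.wordProd (alternatingWord i j (k + 1)) := by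
      rw [alternatingWord_succ, wordProd_concat, ← mul_assoc, ← hdec, simple_mul_simple_cancel_right]
    refine ⟨u, k + 1, hw, by omega, k.succ_pos, huj, hui, ?_⟩
    rw [M.symmetric j i] at hbound
    refine hbound.imp_right fun hk => (Nat.succ_le_of_lt hk).lt_of_ne fun hkM : k + 1 = M i j => hi ?_
    have hws : w * σ i = u * cs.wordProd (alternatingWord i j (M i j - 1)) := by
      rw [hw, mul_assoc, hkM, cs.wordProd_braidWord_mul_simple (by omega)]
    have := cs.length_mul_wordProd_le u (alternatingWord i j (M i j - 1))
    rw [length_alternatingWord, ← hws] at this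
    show ℓ (w * σ i) < ℓ w
    omega

end CoxeterSystem

section WeakOrder

variable {B : Type*} {W : Type*} [Group W] {M : CoxeterMatrix B} {cs : CoxeterSystem M W}

local prefix:100 "ℓ" => cs.length
local prefix:100 "σ" => cs.simple

theorem weakLE_mul_of_length_mul {u t : W} (h : ℓ (u * t) = ℓ u + ℓ t) : WeakLE cs u (u * t) := by
  rw [WeakLE, inv_mul_cancel_left, h]

theorem weakLE_simple_mul_simple_mul_iff {u v : W} {i : B} (hu : ¬cs.IsLeftDescent u i)
    (hv : ¬cs.IsLeftDescent v i) : WeakLE cs (σ i * u) (σ i * v) ↔ WeakLE cs u v := by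
  rw [WeakLE, WeakLE, mul_inv_rev, cs.inv_simple, mul_assoc, simple_mul_simple_cancel_left,
    cs.not_isLeftDescent_iff.mp hu, cs.not_isLeftDescent_iff.mp hv]
  omega

theorem WeakLE.isLeftDescent_of_simple_mul {u v : W} {i : B} (hu : ¬cs.IsLeftDescent u i)
    (h : WeakLE cs (σ i * u) v) : cs.IsLeftDescent v i := by
  have hprod : σ i * v = u * ((σ i * u)⁻¹ * v) := by
    rw [mul_inv_rev, cs.inv_simple, mul_assoc, mul_inv_cancel_left]
  have := cs.length_mul_le u ((σ i * u)⁻¹ * v)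
  rw [← hprod] at this
  have := cs.not_isLeftDescent_iff.mp hu
  unfold WeakLE at h
  unfold IsLeftDescent
  omega

theorem weakLE_wordProd_ofFn {ω : ℕ → B} (hred : ∀ n, cs.IsReduced (List.ofFn fun i : Fin n => ω i))
    {n m : ℕ} (hnm : n ≤ m) :
    WeakLE cs (cs.wordProd (List.ofFn fun i : Fin n => ω i))
      (cs.wordProd (List.ofFn fun i : Fin m => ω i)) := by
  obtain ⟨k, rfl⟩ := Nat.exists_eq_add_of_le hnm
  have hsplit : cs.wordProd (List.ofFn fun i : Fin (n + k) => ω i) =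
      cs.wordProd (List.ofFn fun i : Fin n => ω i) *
        cs.wordProd (List.ofFn fun i : Fin k => ω (n + i)) := by
    rw [List.ofFn_add, wordProd_append]
    rfl
  have hlen : ∀ m, ℓ (cs.wordProd (List.ofFn fun i : Fin m => ω i)) = m := fun m => by
    rw [hred m, List.length_ofFn]
  have hsuffix : ℓ (cs.wordProd (List.ofFn fun i : Fin k => ω (n + i))) ≤ k := by
    simpa using cs.length_wordProd_le (List.ofFn fun i : Fin k => ω (n + i))
  have hprod := hlen (n + k)
  rw [hsplit] at hprod ⊢
  have := cs.length_mul_le (cs.wordProd (List.ofFn fun i : Fin n => ω i))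
    (cs.wordProd (List.ofFn fun i : Fin k => ω (n + i)))
  exact weakLE_mul_of_length_mul (by rw [hlen n] at *; omega)

end WeakOrder

/-- The Chebyshev values `U_{n-1}(c)`; for `c = -B(α_i, α_j)` they are the coordinates of the
roots of the rank-two subsystem spanned by `α_i, α_j`. -/
def dihedralCoeff (c : ℝ) : ℕ → ℝ
  | 0 => 0
  | 1 => 1
  | n + 2 => 2 * c * dihedralCoeff c (n + 1) - dihedralCoeff c n

theorem dihedralCoeff_add_two (c : ℝ) (n : ℕ) :
    dihedralCoeff c (n + 2) = 2 * c * dihedralCoeff c (n + 1) - dihedralCoeff c n := rfl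

theorem dihedralCoeff_cos_mul_sin (θ : ℝ) (n : ℕ) :
    dihedralCoeff (Real.cos θ) n * Real.sin θ = Real.sin (n * θ) := by
  induction n using Nat.twoStepInduction with
  | zero => simp [dihedralCoeff]
  | one => simp [dihedralCoeff]
  | more n ih₀ ih₁ =>
    have hsin : Real.sin ((n + 2 : ℕ) * θ) =
        2 * Real.cos θ * Real.sin ((n + 1 : ℕ) * θ) - Real.sin (n * θ) := by
      push_cast
      rw [show ((n : ℝ) + 2) * θ = (n + 1) * θ + θ by ring,
        show (n : ℝ) * θ = (n + 1) * θ - θ by ring, Real.sin_add, Real.sin_sub]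
      ring
    rw [hsin, dihedralCoeff_add_two, ← ih₀, ← ih₁]
    ring

theorem dihedralCoeff_nonneg_of_one_le {c : ℝ} (hc : 1 ≤ c) (n : ℕ) : 0 ≤ dihedralCoeff c n := by
  suffices h : ∀ n, 0 ≤ dihedralCoeff c n ∧ dihedralCoeff c n ≤ dihedralCoeff c (n + 1) from (h n).1
  intro n
  induction n with
  | zero => simp [dihedralCoeff]
  | succ n ih =>
    obtain ⟨h₀, h₁⟩ := ih
    refine ⟨h₀.trans h₁, ?_⟩
    rw [dihedralCoeff_add_two]
    nlinarith

theorem dihedralCoeff_cos_pi_div_nonneg {m n : ℕ} (hm : 1 < m) (hn : n ≤ m) :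
    0 ≤ dihedralCoeff (Real.cos (Real.pi / m)) n := by
  have hm' : (1 : ℝ) < m := by exact_mod_cast hm
  have hsin : 0 < Real.sin (Real.pi / m) :=
    Real.sin_pos_of_pos_of_lt_pi (by positivity) (div_lt_self Real.pi_pos hm')
  refine nonneg_of_mul_nonneg_left ?_ hsin
  rw [dihedralCoeff_cos_mul_sin]
  refine Real.sin_nonneg_of_nonneg_of_le_pi (by positivity) ?_
  rw [mul_div_assoc', div_le_iff₀ (by positivity), mul_comm]
  exact mul_le_mul_of_nonneg_left (by exact_mod_cast hn) Real.pi_pos.le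

namespace GeomRep

open Finset

variable {B : Type*} [Fintype B] {W : Type*} [Group W]
  {M : CoxeterMatrix B} {cs : CoxeterSystem M W}
  {V : Type*} [AddCommGroup V] [Module ℝ V] (G : GeomRep M cs V)

local prefix:100 "ℓ" => cs.length
local prefix:100 "σ" => cs.simple

def cone : Set V := coneOf (Set.range G.α)

theorem mem_cone_iff {v : V} :
    v ∈ G.cone ↔ ∃ d : B → ℝ, (∀ b, 0 ≤ d b) ∧ ∑ b, d b • G.α b = v := by
  classical
  constructor
  · rintro ⟨n, c, f, hc, hf, rfl⟩
    choose g hg using hf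
    refine ⟨fun b => ∑ t ∈ univ.filter (g · = b), c t, fun b => sum_nonneg fun t _ => hc t, ?_⟩
    rw [← sum_fiberwise univ g fun t => c t • f t]
    refine sum_congr rfl fun b _ => ?_
    rw [sum_smul]
    refine sum_congr rfl fun t ht => ?_
    rw [← hg t, (mem_filter.mp ht).2]
  · rintro ⟨d, hd, rfl⟩
    exact ⟨Fintype.card B, d ∘ (Fintype.equivFin B).symm, G.α ∘ (Fintype.equivFin B).symm,
      fun t => hd _, fun t => Set.mem_range_self _,
      Fintype.sum_equiv (Fintype.equivFin B).symm _ _ fun t => rfl⟩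

theorem alpha_mem_cone (i : B) : G.α i ∈ G.cone :=
  ⟨1, fun _ => 1, fun _ => G.α i, fun _ => zero_le_one, fun _ => Set.mem_range_self i, by simp⟩

theorem add_mem_cone {v w : V} (hv : v ∈ G.cone) (hw : w ∈ G.cone) : v + w ∈ G.cone := by
  obtain ⟨d, hd, rfl⟩ := G.mem_cone_iff.mp hv
  obtain ⟨e, he, rfl⟩ := G.mem_cone_iff.mp hw
  exact G.mem_cone_iff.mpr
    ⟨d + e, fun b => add_nonneg (hd b) (he b), by simp [add_smul, sum_add_distrib]⟩

theorem smul_mem_cone {c : ℝ} (hc : 0 ≤ c) {v : V} (hv : v ∈ G.cone) : c • v ∈ G.cone := by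
  obtain ⟨d, hd, rfl⟩ := G.mem_cone_iff.mp hv
  exact G.mem_cone_iff.mpr
    ⟨fun b => c * d b, fun b => mul_nonneg hc (hd b), by simp [mul_smul, smul_sum]⟩

theorem eq_zero_of_mem_cone_of_neg_mem_cone {v : V} (hv : v ∈ G.cone) (hv' : -v ∈ G.cone) :
    v = 0 := by
  obtain ⟨d, hd, rfl⟩ := G.mem_cone_iff.mp hv
  obtain ⟨e, he, hev⟩ := G.mem_cone_iff.mp hv'
  have hsum : ∑ b, (d b + e b) • G.α b = 0 := by
    simp only [add_smul, sum_add_distrib, hev, add_neg_cancel]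
  have hzero := G.pos_indep _ (fun b => add_nonneg (hd b) (he b)) hsum
  have hd0 : ∀ b, d b = 0 := fun b => by linarith [hzero b, hd b, he b]
  simp [hd0]

theorem pi_mul_apply (u w : W) (v : V) : G.π (u * w) v = G.π u (G.π w v) := by
  rw [map_mul, LinearEquiv.mul_apply]

theorem pi_simple_pi_simple (i : B) (v : V) : G.π (σ i) (G.π (σ i) v) = v := by
  rw [← pi_mul_apply, simple_mul_simple_self, map_one, LinearEquiv.coe_one, id]

theorem pi_simple_alpha_self (i : B) : G.π (σ i) (G.α i) = -G.α i := by
  rw [G.simple_refl, G.norm_one]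
  module

theorem bil_pi_pi (w : W) (u v : V) : G.bil (G.π w u) (G.π w v) = G.bil u v := by
  induction w using cs.simple_induction generalizing u v with
  | simple i =>
    simp only [G.simple_refl, map_sub, map_smul, LinearMap.sub_apply, LinearMap.smul_apply,
      smul_eq_mul, G.norm_one, G.bil_symm u (G.α i)]
    ring
  | one => simp
  | mul w w' hw hw' => rw [pi_mul_apply, pi_mul_apply, hw, hw']

theorem bil_alpha_nonpos {i j : B} (hij : i ≠ j) : G.bil (G.α i) (G.α j) ≤ 0 := by
  rcases eq_or_ne (M i j) 0 with hM | hM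
  · linarith [G.angle_infinite i j hij hM]
  rw [G.angle_finite i j hij hM, neg_nonpos]
  have hm : (2 : ℝ) ≤ M i j := by
    have := M.off_diagonal i j hij
    exact_mod_cast (show 2 ≤ M i j by omega)
  apply Real.cos_nonneg_of_mem_Icc
  constructor
  · linarith [Real.pi_pos, show 0 ≤ Real.pi / M i j by positivity]
  · rw [div_le_iff₀ (by positivity)]
    nlinarith [Real.pi_pos]

theorem alpha_mem_Phi (i : B) : G.α i ∈ G.Phi := ⟨1, i, by simp⟩

theorem pi_mem_Phi (w : W) {v : V} (hv : v ∈ G.Phi) : G.π w v ∈ G.Phi := by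
  obtain ⟨u, i, rfl⟩ := hv
  exact ⟨w * u, i, G.pi_mul_apply _ _ _⟩

theorem neg_mem_Phi {v : V} (hv : v ∈ G.Phi) : -v ∈ G.Phi := by
  obtain ⟨u, i, rfl⟩ := hv
  exact ⟨u * σ i, i, by rw [pi_mul_apply, pi_simple_alpha_self, map_neg]⟩

theorem bil_self_of_mem_Phi {v : V} (hv : v ∈ G.Phi) : G.bil v v = 1 := by
  obtain ⟨u, i, rfl⟩ := hv
  rw [bil_pi_pi, norm_one]

theorem ne_zero_of_mem_Phi {v : V} (hv : v ∈ G.Phi) : v ≠ 0 := by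
  rintro rfl
  simpa using G.bil_self_of_mem_Phi hv

theorem neg_alpha_notMem_cone (i : B) : -G.α i ∉ G.cone := fun h =>
  G.ne_zero_of_mem_Phi (G.alpha_mem_Phi i)
    (G.eq_zero_of_mem_cone_of_neg_mem_cone (G.alpha_mem_cone i) h)

theorem pi_simple_smul_add_smul (i j : B) (a b : ℝ) :
    G.π (σ i) (a • G.α i + b • G.α j) =
      (2 * -G.bil (G.α i) (G.α j) * b - a) • G.α i + b • G.α j := by
  rw [G.simple_refl]
  simp only [map_add, map_smul, smul_eq_mul, G.norm_one]
  module

theorem pi_simple_smul_add_smul' (i j : B) (a b : ℝ) :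
    G.π (σ j) (a • G.α i + b • G.α j) =
      a • G.α i + (2 * -G.bil (G.α i) (G.α j) * a - b) • G.α j := by
  rw [add_comm, pi_simple_smul_add_smul, G.bil_symm, add_comm]

theorem pi_alternatingWord_alpha (i j : B) (k : ℕ) :
    G.π (cs.wordProd (alternatingWord i j k)) (G.α i) =
      letI a := dihedralCoeff (-G.bil (G.α i) (G.α j))
      if Even k then a (k + 1) • G.α i + a k • G.α j else a k • G.α i + a (k + 1) • G.α j := by
  induction k with
  | zero => simp [dihedralCoeff, alternatingWord]
  | succ k ih =>
    rw [alternatingWord_succ', wordProd_cons, pi_mul_apply, ih]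
    rcases Nat.even_or_odd k with hk | hk
    · simp only [hk, if_true, Nat.not_even_iff_odd.mpr hk.add_one, if_false,
        pi_simple_smul_add_smul', dihedralCoeff_add_two]
    · simp only [Nat.not_even_iff_odd.mpr hk, if_false, hk.add_one, if_true,
        pi_simple_smul_add_smul, dihedralCoeff_add_two]

theorem exists_pi_alternatingWord_alpha_eq {i j : B} (hij : i ≠ j) {k : ℕ}
    (hk : M i j = 0 ∨ k < M i j) :
    ∃ a b : ℝ, 0 ≤ a ∧ 0 ≤ b ∧
      G.π (cs.wordProd (alternatingWord i j k)) (G.α i) = a • G.α i + b • G.α j := by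
  have hcoeff : ∀ n ≤ k + 1, 0 ≤ dihedralCoeff (-G.bil (G.α i) (G.α j)) n := by
    intro n hn
    rcases hk with hM | hk
    · exact dihedralCoeff_nonneg_of_one_le (by linarith [G.angle_infinite i j hij hM]) n
    · rw [G.angle_finite i j hij (by omega), neg_neg]
      exact dihedralCoeff_cos_pi_div_nonneg (by have := M.off_diagonal i j hij; omega) (by omega)
  rw [pi_alternatingWord_alpha]
  split_ifs
  · exact ⟨_, _, hcoeff _ le_rfl, hcoeff _ k.le_succ, rfl⟩
  · exact ⟨_, _, hcoeff _ k.le_succ, hcoeff _ le_rfl, rfl⟩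

theorem pi_alpha_mem_cone {w : W} {i : B} (hi : ¬cs.IsRightDescent w i) :
    G.π w (G.α i) ∈ G.cone := by
  induction hn : ℓ w using Nat.strong_induction_on generalizing w i with
  | _ n ih =>
    rcases eq_or_ne w 1 with rfl | hw
    · simpa using G.alpha_mem_cone i
    obtain ⟨j, hj⟩ := cs.exists_rightDescent_of_ne_one hw
    have hij : i ≠ j := by rintro rfl; exact hi hj
    obtain ⟨u, k, rfl, hlen, hk, hui, huj, hbound⟩ := exists_eq_mul_alternatingWord hij hi hj
    obtain ⟨a, b, ha, hb, hab⟩ := G.exists_pi_alternatingWord_alpha_eq hij hbound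
    rw [pi_mul_apply, hab, map_add, map_smul, map_smul]
    exact G.add_mem_cone (G.smul_mem_cone ha (ih _ (by omega) hui rfl))
      (G.smul_mem_cone hb (ih _ (by omega) huj rfl))

theorem neg_pi_alpha_mem_cone {w : W} {i : B} (hi : cs.IsRightDescent w i) :
    -G.π w (G.α i) ∈ G.cone := by
  have := G.pi_alpha_mem_cone (cs.isRightDescent_iff_not_isRightDescent_mul.mp hi)
  rwa [pi_mul_apply, pi_simple_alpha_self, map_neg] at this

theorem isRightDescent_iff_neg_mem_cone {w : W} {i : B} :
    cs.IsRightDescent w i ↔ -G.π w (G.α i) ∈ G.cone := by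
  refine ⟨G.neg_pi_alpha_mem_cone, fun hneg => by_contra fun hi => ?_⟩
  refine G.ne_zero_of_mem_Phi (G.pi_mem_Phi w (G.alpha_mem_Phi i)) ?_
  exact G.eq_zero_of_mem_cone_of_neg_mem_cone (G.pi_alpha_mem_cone hi) hneg

theorem mem_cone_or_neg_mem_cone {v : V} (hv : v ∈ G.Phi) : v ∈ G.cone ∨ -v ∈ G.cone := by
  obtain ⟨w, i, rfl⟩ := hv
  by_cases hi : cs.IsRightDescent w i
  · exact .inr (G.neg_pi_alpha_mem_cone hi)
  · exact .inl (G.pi_alpha_mem_cone hi)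

/-- The simple roots need not be linearly independent. Pairing with `α_i` shows `t ≤ c_i`, since `B(α_i, α_b) ≤ 0` for `b ≠ i`; then positive
independence applies to `c - t • δ_i`. -/
theorem coeff_eq_zero_of_sum_eq_smul_alpha {c : B → ℝ} (hc : ∀ b, 0 ≤ c b) {t : ℝ} {i : B}
    (h : ∑ b, c b • G.α b = t • G.α i) {b : B} (hb : b ≠ i) : c b = 0 := by
  classical
  have ht : t ≤ c i := by
    have hpair := congrArg (G.bil (G.α i)) h
    simp only [map_sum, map_smul, smul_eq_mul, G.norm_one, mul_one] at hpair
    rw [← add_sum_erase _ _ (mem_univ i), G.norm_one, mul_one] at hpair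
    have : ∑ b ∈ univ.erase i, c b * G.bil (G.α i) (G.α b) ≤ 0 :=
      sum_nonpos fun b hb => mul_nonpos_of_nonneg_of_nonpos (hc b)
        (G.bil_alpha_nonpos (ne_of_mem_erase hb).symm)
    linarith
  have hzero := G.pos_indep (c - Pi.single i t) (fun b => ?_) ?_ b
  · simpa [Pi.single_eq_of_ne hb] using hzero
  · rcases eq_or_ne b i with rfl | hb
    · simpa using ht
    · simpa [Pi.single_eq_of_ne hb] using hc b
  · simp [sub_smul, sum_sub_distrib, h, Pi.single_apply]

theorem pi_simple_mem_cone {i : B} {v : V} (hv : v ∈ G.Phi) (hc : v ∈ G.cone) (hne : v ≠ G.α i) :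
    G.π (σ i) v ∈ G.cone := by
  refine (G.mem_cone_or_neg_mem_cone (G.pi_mem_Phi _ hv)).resolve_right fun hneg => hne ?_
  obtain ⟨d, hd, rfl⟩ := G.mem_cone_iff.mp hc
  obtain ⟨e, he, hev⟩ := G.mem_cone_iff.mp hneg
  have hsum : ∑ b, (d b + e b) • G.α b = (2 * G.bil (G.α i) (∑ b, d b • G.α b)) • G.α i := by
    simp only [add_smul, sum_add_distrib, hev, G.simple_refl]
    abel
  have hd0 : ∀ b ≠ i, d b = 0 := fun b hb => by
    linarith [G.coeff_eq_zero_of_sum_eq_smul_alpha (fun b => add_nonneg (hd b) (he b)) hsum hb,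
      hd b, he b]
  have hvi : ∑ b, d b • G.α b = d i • G.α i :=
    sum_eq_single i (fun b _ hb => by rw [hd0 b hb, zero_smul]) (by simp)
  have hnorm := G.bil_self_of_mem_Phi hv
  rw [hvi, map_smul, map_smul, LinearMap.smul_apply, G.norm_one, smul_eq_mul, smul_eq_mul] at hnorm
  rw [hvi, show d i = 1 by nlinarith [hd i], one_smul]

theorem mem_N_iff {w : W} {v : V} :
    v ∈ G.N w ↔ v ∈ G.Phi ∧ v ∈ G.cone ∧ -G.π w⁻¹ v ∈ G.cone := by
  constructor
  · rintro ⟨⟨hΦ, hc⟩, x, ⟨-, hx⟩, rfl⟩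
    refine ⟨hΦ, hc, ?_⟩
    rwa [← pi_mul_apply, inv_mul_cancel, map_one, LinearEquiv.coe_one, id]
  · rintro ⟨hΦ, hc, hneg⟩
    refine ⟨⟨hΦ, hc⟩, G.π w⁻¹ v, ⟨?_, hneg⟩, by simp⟩
    exact G.neg_mem_Phi (G.pi_mem_Phi _ hΦ)

theorem alpha_mem_N_iff {w : W} {i : B} : G.α i ∈ G.N w ↔ cs.IsLeftDescent w i := by
  rw [mem_N_iff, ← cs.isRightDescent_inv_iff, G.isRightDescent_iff_neg_mem_cone]
  simp [G.alpha_mem_Phi i, G.alpha_mem_cone i]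

theorem N_one : G.N 1 = ∅ := by
  refine Set.eq_empty_of_forall_notMem fun v hv => ?_
  obtain ⟨hΦ, hc, hneg⟩ := G.mem_N_iff.mp hv
  rw [inv_one, map_one] at hneg
  exact G.ne_zero_of_mem_Phi hΦ (G.eq_zero_of_mem_cone_of_neg_mem_cone hc hneg)

/-- `s_i` permutes `Φ⁺ \ {α_i}`, and sends `α_i` to `-α_i`. -/
theorem N_simple_mul {u : W} {i : B} (hu : ¬cs.IsLeftDescent u i) :
    G.N (σ i * u) = insert (G.α i) (G.π (σ i) '' G.N u) := by
  have hinv : ∀ v, G.π (σ i * u)⁻¹ v = G.π u⁻¹ (G.π (σ i) v) := fun v => by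
    rw [mul_inv_rev, cs.inv_simple, pi_mul_apply]
  ext v
  rw [Set.mem_insert_iff, mem_N_iff]
  constructor
  · rintro ⟨hΦ, hc, hneg⟩
    refine or_iff_not_imp_left.mpr fun hvα => ⟨G.π (σ i) v, ?_, G.pi_simple_pi_simple i v⟩
    exact G.mem_N_iff.mpr ⟨G.pi_mem_Phi _ hΦ, G.pi_simple_mem_cone hΦ hc hvα, by rwa [← hinv]⟩
  · rintro (rfl | ⟨γ, hγ, rfl⟩)
    · refine ⟨G.alpha_mem_Phi i, G.alpha_mem_cone i, ?_⟩
      rw [hinv, pi_simple_alpha_self, map_neg, neg_neg]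
      exact G.pi_alpha_mem_cone (mt cs.isRightDescent_inv_iff.mp hu)
    · obtain ⟨hΦ, hc, hneg⟩ := G.mem_N_iff.mp hγ
      have hγα : γ ≠ G.α i := fun h => hu (G.alpha_mem_N_iff.mp (h ▸ hγ))
      refine ⟨G.pi_mem_Phi _ hΦ, G.pi_simple_mem_cone hΦ hc hγα, ?_⟩
      rwa [hinv, pi_simple_pi_simple]

theorem N_finite (w : W) : (G.N w).Finite := by
  induction w using cs.induction_on_reduced_left with
  | one => simp [N_one]
  | mul w i hi hw => simpa [G.N_simple_mul hi] using hw.image _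

theorem N_subset_N_of_weakLE {u v : W} (h : WeakLE cs u v) : G.N u ⊆ G.N v := by
  induction u using cs.induction_on_reduced_left generalizing v with
  | one => simp [N_one]
  | mul u i hu ih =>
    have hv := h.isLeftDescent_of_simple_mul hu
    rw [← cs.simple_mul_simple_cancel_left i (w := v)] at h ⊢
    have hv' := cs.isLeftDescent_iff_not_isLeftDescent_mul.mp hv
    rw [weakLE_simple_mul_simple_mul_iff hu hv'] at h
    rw [G.N_simple_mul hu, G.N_simple_mul hv']
    exact Set.insert_subset_insert (Set.image_mono (ih h))

theorem weakLE_of_N_subset_N {u v : W} (h : G.N u ⊆ G.N v) : WeakLE cs u v := by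
  induction u using cs.induction_on_reduced_left generalizing v with
  | one => simp [WeakLE]
  | mul u i hu ih =>
    rw [G.N_simple_mul hu, Set.insert_subset_iff] at h
    obtain ⟨hαv, h⟩ := h
    have hv := G.alpha_mem_N_iff.mp hαv
    rw [← cs.simple_mul_simple_cancel_left i (w := v)] at h ⊢
    have hv' := cs.isLeftDescent_iff_not_isLeftDescent_mul.mp hv
    rw [weakLE_simple_mul_simple_mul_iff hu hv']
    refine ih fun γ hγ => ?_
    obtain h | ⟨δ, hδ, hδγ⟩ := G.N_simple_mul hv' ▸ h ⟨γ, hγ, rfl⟩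
    · have hγ' : γ = -G.α i := by rw [← G.pi_simple_pi_simple i γ, h, pi_simple_alpha_self]
      exact absurd (hγ' ▸ (G.mem_N_iff.mp hγ).2.1) (G.neg_alpha_notMem_cone i)
    · exact (G.π (σ i)).injective hδγ ▸ hδ

theorem N_subset_N_iff {u v : W} : G.N u ⊆ G.N v ↔ WeakLE cs u v :=
  ⟨G.weakLE_of_N_subset_N, G.N_subset_N_of_weakLE⟩

end GeomRep

/-- `w ∈ W` is a prefix of the infinite reduced word `ω` iff
`N(w) ⊆ N(ω)`. -/
theorem stmt17 {B : Type*} [Fintype B] {W : Type*} [Group W]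
    {M : CoxeterMatrix B} {cs : CoxeterSystem M W}
    {V : Type*} [AddCommGroup V] [Module ℝ V] (G : GeomRep M cs V)
    (ω : ℕ → B) (hred : ∀ n, cs.IsReduced (List.ofFn fun i : Fin n => ω i)) (w : W) :
    (∃ j : ℕ, WeakLE cs w (cs.wordProd (List.ofFn fun i : Fin j => ω i))) ↔
      G.N w ⊆ ⋃ n : ℕ, G.N (cs.wordProd (List.ofFn fun i : Fin n => ω i)) := by
  have hmono : Monotone fun n => G.N (cs.wordProd (List.ofFn fun i : Fin n => ω i)) :=
    fun n m hnm => G.N_subset_N_iff.mpr (weakLE_wordProd_ofFn hred hnm)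
  constructor
  · rintro ⟨j, hj⟩
    exact (G.N_subset_N_iff.mpr hj).trans (Set.subset_iUnion_of_subset j subset_rfl)
  · intro h
    obtain ⟨j, hj⟩ := (G.N_finite w).exists_subset_of_subset_iUnion_of_monotone hmono h
    exact ⟨j, G.N_subset_N_iff.mp hj⟩
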